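/- arXiv:2004.08391 — 3 statements merged into one kernel-verified Lean document; each statement's English description precedes it below -/
import Mathlib

section
/- Let X be a locally compact metric space (or real analytic manifold), (τ,V) a finite dimensional continuous unitary-izable representation of a compact group K, and for each u ∈ X let ⟨·,·⟩_u be an inner product on V with respect to which every τ(k) is unitary, varying continuously (resp. real analytically) in u. Then there exist maps u ↦ e₁(u),…,e_n(u) ∈ V, continuous (resp. real analytic) in u, such that for each u the vectors e₁(u),…,e_n(u) form an orthonormal basis of V with respect to ⟨·,·⟩_u, and the matrix of τ(k) with respect to this basis is independent of u for every k ∈ K. -/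
/-!
Fix a basis of `V`. The inner products become a continuous family of positive definite Gram
matrices `G u`, and `τ` a family of invertible matrices `M k` with `(M k)ᴴ * G u * M k = G u`.
Conjugating by `b = (G u₀) ^ (-1/2)` normalises the family to `H u = b * G u * b` with
`H u₀ = 1`; invariance at `u₀` then makes the conjugated matrices `N k` unitary, so they commute
with every `H u` and hence with `(H u) ^ (-1/2)`, which depends continuously on `u` by the
continuity of the functional calculus. The columns of `b * (H u) ^ (-1/2)` are the required frame,
and `τ k` has matrix `N k` in it for every `u`.
-/

open Matrix

lemma commute_of_star_mul_self_eq_one_of_star_mul_mul_eq {A : Type*} [Monoid A] [StarMul A]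
    {m g : A} (hm : IsUnit m) (hm₁ : star m * m = 1) (h : star m * g * m = g) : Commute m g := by
  have hm₂ : m * star m = 1 := by
    obtain ⟨u, rfl⟩ := hm
    rw [← u.inv_eq_of_mul_eq_one_left hm₁, u.mul_inv]
  calc m * g = m * (star m * g * m) := by rw [h]
    _ = m * star m * g * m := by simp only [mul_assoc]
    _ = g * m := by rw [hm₂, one_mul]

section CStarAlgebra

variable {A : Type*} [CStarAlgebra A] [PartialOrder A] [StarOrderedRing A]

lemma star_rpow {a : A} {r : ℝ} : star (a ^ r) = a ^ r := CFC.rpow_nonneg.isSelfAdjoint.star_eq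

lemma IsStrictlyPositive.rpow_neg_half_mul_mul_rpow_neg_half {a : A}
    (ha : IsStrictlyPositive a) : a ^ (-(1 / 2) : ℝ) * a * a ^ (-(1 / 2) : ℝ) = 1 := by
  nth_rw 2 [← CFC.rpow_one a]
  rw [← CFC.rpow_add ha.isUnit, ← CFC.rpow_add ha.isUnit]
  norm_num [CFC.rpow_zero a]

theorem exists_continuous_star_mul_mul_eq_one_and_intertwining {X K : Type*}
    [TopologicalSpace X] {G : X → A} (hG : Continuous G)
    (hpos : ∀ u, IsStrictlyPositive (G u)) {M : K → A} (hMunit : ∀ k, IsUnit (M k))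
    (hM : ∀ k u, star (M k) * G u * M k = G u) :
    ∃ C : X → A, Continuous C ∧ (∀ u, star (C u) * G u * C u = 1) ∧
      ∃ M' : K → A, ∀ k u, M k * C u = C u * M' k := by
  rcases isEmpty_or_nonempty X with hX | ⟨⟨u₀⟩⟩
  · exact ⟨fun _ => 1, continuous_const, fun u => isEmptyElim u, M, by simp⟩
  set b := G u₀ ^ (-(1 / 2) : ℝ)
  set p := G u₀ ^ (1 / 2 : ℝ)
  have hpb : p * b = 1 := CFC.rpow_mul_rpow_neg _ (hpos u₀)
  have hbp : b * p = 1 := CFC.rpow_neg_mul_rpow _ (hpos u₀)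
  have hbunit : IsUnit b := ⟨⟨b, p, hbp, hpb⟩, rfl⟩
  have hpunit : IsUnit p := ⟨⟨p, b, hpb, hbp⟩, rfl⟩
  set H := fun u => b * G u * b
  set N := fun k => p * M k * b
  set S := fun u => H u ^ (-(1 / 2) : ℝ)
  have hHpos : ∀ u, IsStrictlyPositive (H u) := fun u =>
    (hbunit.isStrictlyPositive_iff_conjugate_of_isSelfAdjoint _ _
      CFC.rpow_nonneg.isSelfAdjoint).mpr (hpos u)
  have hH₀ : H u₀ = 1 := (hpos u₀).rpow_neg_half_mul_mul_rpow_neg_half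
  have hN : ∀ k u, star (N k) * H u * N k = H u := by
    intro k u
    calc star (N k) * H u * N k = b * star (M k) * (p * b) * G u * (b * p) * M k * b := by
          simp only [N, H, star_mul, star_rpow, b, p]; noncomm_ring
      _ = b * (star (M k) * G u * M k) * b := by rw [hpb, hbp]; noncomm_ring
      _ = H u := by rw [hM]
  have hNcomm : ∀ k u, Commute (N k) (S u) := by
    intro k u
    have hN₁ : star (N k) * N k = 1 := by simpa [hH₀] using hN k u₀
    exact ((commute_of_star_mul_self_eq_one_of_star_mul_mul_eq
      ((hpunit.mul (hMunit k)).mul hbunit) hN₁ (hN k u)).symm.cfc_nnreal _).symm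
  refine ⟨fun u => b * S u, ?_, fun u => ?_, N, fun k u => ?_⟩
  · exact continuous_const.mul <| (CFC.continuousOn_rpow _).comp_continuous
      (continuous_const.mul hG |>.mul continuous_const) hHpos
  · calc star (b * S u) * G u * (b * S u) = S u * H u * S u := by
          simp only [S, H, star_mul, star_rpow, b]; noncomm_ring
      _ = 1 := (hHpos u).rpow_neg_half_mul_mul_rpow_neg_half
  · calc M k * (b * S u) = b * p * M k * b * S u := by rw [hbp, one_mul, mul_assoc]
      _ = b * (N k * S u) := by simp only [N, mul_assoc]
      _ = b * S u * N k := by rw [(hNcomm k u).eq, mul_assoc]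

end CStarAlgebra

theorem LinearMap.apply_toLin_basis_of_toMatrix_mul_eq {R M ι : Type*} [CommRing R]
    [AddCommGroup M] [Module R M] [Fintype ι] [DecidableEq ι] (b : Module.Basis ι R M)
    (f : M →ₗ[R] M) {C N : Matrix ι ι R} (h : toMatrix b b f * C = C * N) (i : ι) :
    f (toLin b b C (b i)) = ∑ j, N j i • toLin b b C (b j) := by
  calc f (toLin b b C (b i)) = toLin b b (toMatrix b b f * C) (b i) := by
        rw [toLin_mul_apply b b b, toLin_toMatrix]
    _ = toLin b b C (toLin b b N (b i)) := by rw [h, toLin_mul_apply b b b]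
    _ = ∑ j, N j i • toLin b b C (b j) := by simp [toLin_self]

section Sesquilinear

variable {R M ι : Type*} [CommRing R] [StarRing R] [AddCommGroup M] [Module R M]

/-- Mathlib's sesquilinear forms are conjugate-linear in the first argument, so the arguments
of `f` are swapped. -/
def hermitianForm (f : M → M → R) (hadd : ∀ v v' w, f (v + v') w = f v w + f v' w)
    (hsmul : ∀ (c : R) v w, f (c • v) w = c * f v w)
    (hconj : ∀ v w, f v w = starRingEnd R (f w v)) : M →ₗ⋆[R] M →ₗ[R] R :=
  LinearMap.mk₂'ₛₗ _ _ (fun v w => f w v)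
    (fun v v' w => by simp only [hconj w, hadd, map_add])
    (fun c v w => by simp only [hconj w, hsmul, map_mul, smul_eq_mul])
    (fun v w w' => hadd w w' v)
    (fun c v w => hsmul c w v)

@[simp]
lemma hermitianForm_apply (f : M → M → R) (hadd) (hsmul) (hconj) (v w : M) :
    hermitianForm f hadd hsmul hconj v w = f w v :=
  rfl

lemma isSymm_hermitianForm (f : M → M → R) (hadd) (hsmul) (hconj) :
    (hermitianForm f hadd hsmul hconj).IsSymm :=
  ⟨fun x y => (hconj x y).symm⟩

variable [Fintype ι] [DecidableEq ι] (b : Module.Basis ι R M)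

theorem LinearMap.conjTranspose_toMatrix_mul_toMatrix₂_mul_toMatrix
    (B : M →ₗ⋆[R] M →ₗ[R] R) (f : M →ₗ[R] M) :
    (toMatrix b b f)ᴴ * toMatrix₂ b b B * toMatrix b b f =
      Matrix.of fun i j => B (f (b i)) (f (b j)) := by
  ext i j
  rw [mul_mul_apply, of_apply, apply_eq_star_dotProduct_toMatrix₂_mulVec b]
  congr 2 <;> ext l <;> simp [LinearMap.toMatrix_apply]

theorem LinearMap.posDef_toMatrix₂ [PartialOrder R] {B : M →ₗ⋆[R] M →ₗ[R] R}
    (hB : B.IsSymm) (hpos : ∀ x ≠ 0, 0 < B x x) : (toMatrix₂ b b B).PosDef := by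
  refine posDef_iff_dotProduct_mulVec.mpr ⟨(B.isSymm_iff_isHermitian_toMatrix b).mp hB,
    fun x hx => ?_⟩
  rw [star_dotProduct_toMatrix₂_mulVec]
  exact hpos _ (b.equivFun.symm.map_ne_zero_iff.mpr hx)

end Sesquilinear

open scoped Matrix.Norms.L2Operator MatrixOrder ComplexOrder

theorem stmt3_general
    {X : Type*} [MetricSpace X]
    {K : Type*} [Group K]
    {V : Type*} [AddCommGroup V] [Module ℂ V] [FiniteDimensional ℂ V]
    [TopologicalSpace V] [IsTopologicalAddGroup V] [ContinuousSMul ℂ V]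
    {n : ℕ} (hdim : Module.finrank ℂ V = n)
    (τ : K →* (V ≃ₗ[ℂ] V))
    (ip : X → V → V → ℂ)
    (hadd₁ : ∀ u v v' w, ip u (v + v') w = ip u v w + ip u v' w)
    (hsmul₁ : ∀ u (c : ℂ) v w, ip u (c • v) w = c * ip u v w)
    (hconj : ∀ u v w, ip u v w = starRingEnd ℂ (ip u w v))
    (hposdef : ∀ u v, v ≠ 0 → 0 < (ip u v v).re)
    (hKinv : ∀ u k v w, ip u (τ k v) (τ k w) = ip u v w)
    (hcont : ∀ v w, Continuous fun u => ip u v w) :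
    ∃ e : X → Fin n → V,
      (∀ i, Continuous fun u => e u i) ∧
      (∀ u i j, ip u (e u i) (e u j) = if i = j then 1 else 0) ∧
      ∃ mcoef : K → Matrix (Fin n) (Fin n) ℂ,
        ∀ u k i, τ k (e u i) = ∑ j, mcoef k j i • e u j := by
  let c : Module.Basis (Fin n) ℂ V := (Module.finBasis ℂ V).reindex (finCongr hdim)
  let B u := hermitianForm (ip u) (hadd₁ u) (hsmul₁ u) (hconj u)
  let G u := LinearMap.toMatrix₂ c c (B u)
  let M k := LinearMap.toMatrix c c (τ k : V →ₗ[ℂ] V)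
  have hG : Continuous G := continuous_matrix fun i j => by simpa [G, B] using hcont (c j) (c i)
  have hGpos u : IsStrictlyPositive (G u) := by
    refine PosDef.isStrictlyPositive <|
      LinearMap.posDef_toMatrix₂ c (isSymm_hermitianForm _ _ _ _) fun v hv => ?_
    have him : (ip u v v).im = 0 := Complex.conj_eq_iff_im.mp (hconj u v v).symm
    exact Complex.pos_iff.mpr ⟨hposdef u v hv, him.symm⟩
  have hMunit k : IsUnit (M k) :=
    (LinearMap.isUnit_toMatrix_iff c).mpr ((Module.End.isUnit_iff _).mpr (τ k).bijective)
  have hM k u : star (M k) * G u * M k = G u := by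
    rw [star_eq_conjTranspose, LinearMap.conjTranspose_toMatrix_mul_toMatrix₂_mul_toMatrix]
    ext i j
    simpa [B, G] using hKinv u k (c j) (c i)
  obtain ⟨C, hC, hCG, M', hMC⟩ :=
    exists_continuous_star_mul_mul_eq_one_and_intertwining hG hGpos hMunit hM
  refine ⟨fun u i => toLin c c (C u) (c i), fun i => ?_, fun u i j => ?_, M', fun u k i => ?_⟩
  · simp only [toLin_self]
    exact continuous_finsetSum _ fun j _ => (hC.matrix_elem j i).smul continuous_const
  · have h := congrFun (congrFun (hCG u) j) i
    rw [star_eq_conjTranspose, ← LinearMap.toMatrix_toLin c c (C u),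
      LinearMap.conjTranspose_toMatrix_mul_toMatrix₂_mul_toMatrix, of_apply, one_apply] at h
    rw [← hermitianForm_apply (ip u) (hadd₁ u) (hsmul₁ u) (hconj u), h]
    exact if_congr eq_comm rfl rfl
  · exact LinearMap.apply_toLin_basis_of_toMatrix_mul_eq c (τ k : V →ₗ[ℂ] V) (hMC k u) i

/-- Given a continuous family `u ↦ ⟨·,·⟩_u` of `K`-invariant Hermitian
inner products (`ip u`, linear in the first variable) on a finite dimensional
continuous representation `(τ, V)` of a compact group `K`, there are continuous maps
`u ↦ e₁(u), …, e_n(u)` forming, for each `u`, an orthonormal basis of `V` with respect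
to `⟨·,·⟩_u` (orthonormality together with `n = dim V` makes each `e(u)` a basis),
such that the matrix of every `τ(k)` in this basis is independent of `u`. -/
theorem stmt3
    {X : Type*} [MetricSpace X] [LocallyCompactSpace X]
    {K : Type*} [Group K] [TopologicalSpace K] [IsTopologicalGroup K] [CompactSpace K]
    {V : Type*} [AddCommGroup V] [Module ℂ V] [FiniteDimensional ℂ V]
    [TopologicalSpace V] [IsTopologicalAddGroup V] [ContinuousSMul ℂ V] [T2Space V]
    {n : ℕ} (hdim : Module.finrank ℂ V = n)
    (τ : K →* (V ≃ₗ[ℂ] V))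
    (hτcont : Continuous fun p : K × V => τ p.1 p.2)
    (ip : X → V → V → ℂ)
    (hadd₁ : ∀ u v v' w, ip u (v + v') w = ip u v w + ip u v' w)
    (hsmul₁ : ∀ u (c : ℂ) v w, ip u (c • v) w = c * ip u v w)
    (hconj : ∀ u v w, ip u v w = starRingEnd ℂ (ip u w v))
    (hposdef : ∀ u v, v ≠ 0 → 0 < (ip u v v).re)
    (hKinv : ∀ u k v w, ip u (τ k v) (τ k w) = ip u v w)
    (hcont : ∀ v w, Continuous fun u => ip u v w) :
    ∃ e : X → Fin n → V,
      (∀ i, Continuous fun u => e u i) ∧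
      (∀ u i j, ip u (e u i) (e u j) = if i = j then 1 else 0) ∧
      ∃ mcoef : K → Matrix (Fin n) (Fin n) ℂ,
        ∀ u k i, τ k (e u i) = ∑ j, mcoef k j i • e u j :=
  stmt3_general hdim τ ip hadd₁ hsmul₁ hconj hposdef hKinv hcont
end

section
/- With 𝐃 = ℂ[z₁,…,z_l] ⊂ Z(𝔤) (z_i = symm(w_i)) and the multiplication map ℋ̃ ⊗ Ẽ ⊗ 𝐃 ⊗ U(𝔨) → U(𝔤) a linear bijection (where ℋ̃ = symm(ℋ), Ẽ = symm(E)), the subalgebra 𝐃U(𝔨) of U(𝔤) is isomorphic to the tensor product algebra 𝐃 ⊗ U(𝔨), and U(𝔤) is a free right 𝐃U(𝔨)-module. -/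
open TensorProduct

set_option maxHeartbeats 1000000
set_option synthInstance.maxHeartbeats 400000

/-- Let `A` stand for `U(𝔤)`, `D = ℂ[z₁,…,z_l] ⊆ Z(𝔤)` the central
polynomial subalgebra generated by the central elements `z i`, `Kk` the subalgebra
`U(𝔨)`, and `HE ⊆ A` the subspace `symm(ℋ)·symm(E)`, with the multiplication map
`HE ⊗ D ⊗ U(𝔨) → U(𝔤)` a linear bijection (hypothesis `hfree`).  Then the subalgebra
`D·U(𝔨)` is isomorphic to the tensor product algebra `D ⊗ U(𝔨)` (the canonical
algebra map `D ⊗ U(𝔨) → A` is injective with range `D ⊔ U(𝔨)`), and `U(𝔤)` is a free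
right `D·U(𝔨)`-module with basis space `HE`. -/
theorem stmt12
    {A : Type*} [Ring A] [Algebra ℂ A] {l : ℕ}
    (z : Fin l → A) (hzc : ∀ i, z i ∈ Set.center A)
    (D Kk : Subalgebra ℂ A)
    (hD : D = Algebra.adjoin ℂ (Set.range z))
    (hDcentral : ∀ d ∈ D, ∀ x : A, d * x = x * d)
    (HE : Submodule ℂ A)
    (hfree : Function.Bijective
      ((LinearMap.mul' ℂ A).comp
        (TensorProduct.map HE.subtype
          (Submodule.mulMap (Subalgebra.toSubmodule D) (Subalgebra.toSubmodule Kk))))) :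
    Function.Injective
      (Algebra.TensorProduct.lift D.val Kk.val
        (fun d k => (hDcentral (d : A) d.2 (k : A)))) ∧
    (Algebra.TensorProduct.lift D.val Kk.val
        (fun d k => (hDcentral (d : A) d.2 (k : A)))).range = D ⊔ Kk ∧
    Function.Bijective
      ((LinearMap.mul' ℂ A).comp
        (TensorProduct.map HE.subtype
          (Algebra.TensorProduct.lift D.val Kk.val
            (fun d k => (hDcentral (d : A) d.2 (k : A)))).toLinearMap)) := by
  set f := Algebra.TensorProduct.lift D.val Kk.val
      (fun d k => (hDcentral (d : A) d.2 (k : A))) with hf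
  have ftmul : ∀ (d : D) (k : Kk), f (d ⊗ₜ[ℂ] k) = (d : A) * (k : A) := fun d k =>
    Algebra.TensorProduct.lift_tmul D.val Kk.val
      (fun d k => (hDcentral (d : A) d.2 (k : A))) d k
  -- The linear map underlying `f` is exactly the multiplication map on submodules.
  have key : f.toLinearMap
      = Submodule.mulMap (Subalgebra.toSubmodule D) (Subalgebra.toSubmodule Kk) := by
    apply TensorProduct.ext'
    intro d k
    exact (ftmul d k).trans
      (Submodule.mulMap_tmul (Subalgebra.toSubmodule D) (Subalgebra.toSubmodule Kk) d k).symm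
  -- Part 3
  have part3 : Function.Bijective
      ((LinearMap.mul' ℂ A).comp (TensorProduct.map HE.subtype f.toLinearMap)) := by
    rw [key]; exact hfree
  -- Part 1 : injectivity of `f`
  have part1 : Function.Injective f := by
    have hker : ∀ t : ↥D ⊗[ℂ] ↥Kk, f t = 0 → t = 0 := by
      intro t ht
      -- for every `h ∈ HE`, `h ⊗ t` is killed by the bijection, hence zero
      have htens : ∀ h : HE, (h ⊗ₜ[ℂ] t : HE ⊗[ℂ] (↥D ⊗[ℂ] ↥Kk)) = 0 := by
        intro h
        apply part3.injective
        have h0 : f.toLinearMap t = 0 := ht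
        rw [LinearMap.comp_apply, LinearMap.comp_apply, TensorProduct.map_tmul, h0,
          TensorProduct.tmul_zero, map_zero, map_zero, map_zero]
      by_contra ht0
      -- choose a functional separating `t` from `0`
      obtain ⟨φ, hφ⟩ : ∃ φ : Module.Dual ℂ (↥D ⊗[ℂ] ↥Kk), φ t ≠ 0 := by
        by_contra hall
        push_neg at hall
        exact ht0 ((Module.forall_dual_apply_eq_zero_iff ℂ t).mp hall)
      -- then every element of `HE` is zero
      have hHE : ∀ h : HE, h = 0 := by
        intro h
        have h1 := congrArg (TensorProduct.map (LinearMap.id : HE →ₗ[ℂ] HE) φ) (htens h)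
        rw [TensorProduct.map_tmul, map_zero] at h1
        have h2 := congrArg (TensorProduct.rid ℂ HE) h1
        rw [map_zero] at h2
        simp only [TensorProduct.rid_tmul, LinearMap.id_coe, id_eq] at h2
        exact (smul_eq_zero.mp h2).resolve_left hφ
      haveI : Subsingleton HE := ⟨fun a b => by rw [hHE a, hHE b]⟩
      haveI : Subsingleton (HE ⊗[ℂ] (↥D ⊗[ℂ] ↥Kk)) :=
        (TensorProduct.uniqueLeft).instSubsingleton
      -- hence the domain of the bijection is trivial, so `A` is trivial
      have hA : ∀ a : A, a = 0 := by
        intro a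
        obtain ⟨x, hx⟩ := part3.surjective a
        rw [← hx, Subsingleton.elim x 0, map_zero]
      -- trivial `A` forces `D ⊗ Kk` trivial
      haveI : Subsingleton A := ⟨fun a b => by rw [hA a, hA b]⟩
      haveI : Subsingleton ↥D := ⟨fun a b => Subtype.ext (Subsingleton.elim _ _)⟩
      haveI : Subsingleton (↥D ⊗[ℂ] ↥Kk) := (TensorProduct.uniqueLeft).instSubsingleton
      exact ht0 (Subsingleton.elim t 0)
    intro x y hxy
    have h3 : f (x - y) = 0 := by rw [map_sub, hxy, sub_self]
    exact sub_eq_zero.mp (hker _ h3)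
  refine ⟨part1, ?_, part3⟩
  -- Part 2 : range of `f` is `D ⊔ Kk`
  apply le_antisymm
  · rintro x ⟨y, rfl⟩
    induction y using TensorProduct.induction_on with
    | zero => rw [map_zero]; exact Subalgebra.zero_mem _
    | tmul d k =>
      show f (d ⊗ₜ[ℂ] k) ∈ D ⊔ Kk
      rw [ftmul d k]
      exact mul_mem ((le_sup_left : D ≤ D ⊔ Kk) d.2) ((le_sup_right : Kk ≤ D ⊔ Kk) k.2)
    | add u v hu hv =>
      show f (u + v) ∈ D ⊔ Kk
      rw [map_add]
      exact add_mem hu hv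
  · apply sup_le
    · intro d hd
      refine ⟨⟨d, hd⟩ ⊗ₜ[ℂ] 1, ?_⟩
      show f _ = d
      rw [ftmul]
      simp
    · intro k hk
      refine ⟨1 ⊗ₜ[ℂ] ⟨k, hk⟩, ?_⟩
      show f _ = k
      rw [ftmul]
      simp
end

section
/- Let (π,V) be an analytic family of admissible (𝔤,K)-modules over a connected analytic manifold Z, and assume (π_{z₀},V) is finitely generated for some z₀ ∈ Z. Then for every T ∈ Z(𝔤) there exist an integer n and analytic functions a₀,…,a_{n−1} on Z such that π_z(T)^n + Σ_{j<n} a_j(z) π_z(T)^j = 0 on V for all z ∈ Z. -/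
/-!
On the finite dimensional generating subspace `L = ⨁_{γ ∈ F} V(γ)`, which every central element
preserves, Cayley–Hamilton for the compression of `μ_z(T)` to `L` gives a monic polynomial `p_z`
whose coefficients are polynomials in analytic matrix coefficients. The central element
`S_z = p_z(T)` kills `L`, hence all of `μ_z(A) L`. Fix `γ`. Since `μ_{z₀}(A) L` spans `V`, the
projections to `V(γ)` of finitely many vectors `μ_{z₀}(y) w` with `w ∈ L` form a basis of `V(γ)`;
their determinant is analytic and equals `1` at `z₀`, so the projections of `μ_z(y) w` still span
`V(γ)` near `z₀`, and `μ_z(S_z)` vanishes on `V(γ)` there. Its matrix coefficients are analytic,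
so it vanishes on `V(γ)` for every `z` of the connected set `U`.
-/

open Polynomial Filter Topology Module

section ScalarAnalytic

variable {𝕜 E R : Type*} [NontriviallyNormedField 𝕜] [NormedAddCommGroup E] [NormedSpace 𝕜 E]
  [NormedCommRing R] [NormedAlgebra 𝕜 R] {U : Set E}

theorem AnalyticOnNhd.mvPolynomial_eval {ι : Type*} {f : ι → E → R}
    (hf : ∀ i, AnalyticOnNhd 𝕜 (f i) U) (p : MvPolynomial ι R) :
    AnalyticOnNhd 𝕜 (fun z => MvPolynomial.eval (fun i => f i z) p) U := by
  induction p using MvPolynomial.induction_on with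
  | C a => simpa using analyticOnNhd_const
  | add p q hp hq =>
    simp only [map_add]
    exact hp.add hq
  | mul_X p i hp => simpa using hp.mul (hf i)

variable {n : Type*} [Fintype n] [DecidableEq n] {M : E → Matrix n n R}

theorem AnalyticOnNhd.matrix_charpoly_coeff (hM : ∀ i j, AnalyticOnNhd 𝕜 (fun z => M z i j) U)
    (k : ℕ) : AnalyticOnNhd 𝕜 (fun z => (M z).charpoly.coeff k) U := by
  have h : ∀ z, (M z).charpoly.coeff k =
      MvPolynomial.eval (fun p : n × n => M z p.1 p.2) ((Matrix.charpoly.univ R n).coeff k) :=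
    fun z => by
      rw [MvPolynomial.eval, Matrix.charpoly.univ_coeff_eval₂Hom]
      rfl
  rw [funext h]
  exact AnalyticOnNhd.mvPolynomial_eval (f := fun (p : n × n) z => M z p.1 p.2)
    (fun p => hM p.1 p.2) _

theorem AnalyticOnNhd.matrix_det (hM : ∀ i j, AnalyticOnNhd 𝕜 (fun z => M z i j) U) :
    AnalyticOnNhd 𝕜 (fun z => (M z).det) U := by
  simp_rw [Matrix.det_eq_sign_charpoly_coeff]
  exact analyticOnNhd_const.mul (AnalyticOnNhd.matrix_charpoly_coeff hM 0)

end ScalarAnalytic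

theorem Polynomial.Monic.aeval_eq_pow_add_sum {R S : Type*} [CommSemiring R] [Semiring S]
    [Algebra R S] {p : R[X]} (hp : p.Monic) {n : ℕ} (hn : p.natDegree = n) (x : S) :
    aeval x p = x ^ n + ∑ j : Fin n, p.coeff j • x ^ (j : ℕ) := by
  subst hn
  rw [aeval_eq_sum_range, Finset.sum_range_succ, hp.coeff_natDegree, one_smul, add_comm,
    Fin.sum_univ_eq_sum_range (fun j => p.coeff j • x ^ j)]

theorem LinearMap.coe_aeval_restrict_apply {R M : Type*} [CommSemiring R] [AddCommMonoid M]
    [Module R M] {f : Module.End R M} {p : Submodule R M} (hf : ∀ x ∈ p, f x ∈ p) (q : R[X])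
    (x : p) : (aeval (f.restrict hf) q x : M) = aeval f q x := by
  simp [aeval_eq_sum_range, LinearMap.sum_apply, Module.End.pow_restrict _ hf]

theorem iSupIndep.isCompl_iSup_ne {α ι : Type*} [CompleteLattice α] {p : ι → α}
    (hp : iSupIndep p) (htop : ⨆ i, p i = ⊤) (i : ι) : IsCompl (p i) (⨆ (j) (_ : j ≠ i), p j) :=
  ⟨hp i, codisjoint_iff.mpr (by rw [← iSup_split_single, htop])⟩

theorem Submodule.projectionOnto_apply_projection {R M : Type*} [Ring R] [AddCommGroup M]
    [Module R M] {p q : Submodule R M} (h : IsCompl p q) {f : Module.End R M}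
    (hf : ∀ x ∈ q, f x ∈ q) (x : M) :
    p.projectionOnto q h (f (p.projection q h x)) = p.projectionOnto q h (f x) := by
  rw [eq_comm, ← sub_eq_zero, ← map_sub, ← map_sub, projectionOnto_apply_eq_zero_iff,
    ← projection_eq_self_sub_projection h]
  exact hf _ (projection_apply_mem _ _)

theorem Submodule.biSup_le_comap_biSup {R M ι : Type*} [Semiring R] [AddCommMonoid M] [Module R M]
    {p : ι → Submodule R M} {f : Module.End R M} (hf : ∀ i, ∀ v ∈ p i, f v ∈ p i)
    (P : ι → Prop) : ⨆ (i) (_ : P i), p i ≤ (⨆ (i) (_ : P i), p i).comap f :=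
  iSup₂_le fun i hi v hv => le_iSup₂ (f := fun i (_ : P i) => p i) i hi (hf i v hv)

section WeaklyAnalytic

variable {𝕜 K E V W : Type*} [NontriviallyNormedField 𝕜] [NormedField K] [NormedAlgebra 𝕜 K]
  [NormedAddCommGroup E] [NormedSpace 𝕜 E] [AddCommGroup V] [Module K V] [AddCommGroup W]
  [Module K W] {U : Set E}

variable (𝕜 K) in
def WeaklyAnalyticOn (f : E → V) (U : Set E) : Prop :=
  ∀ ℓ : V →ₗ[K] K, AnalyticOnNhd 𝕜 (fun z => ℓ (f z)) U

theorem WeaklyAnalyticOn.of_locally_finite_sum {f : E → V} (hU : IsOpen U)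
    (hf : ∀ z₀ ∈ U, ∃ U' : Set E, IsOpen U' ∧ z₀ ∈ U' ∧
      ∃ (r : ℕ) (w : Fin r → V) (c : Fin r → E → K),
        (∀ i, AnalyticOnNhd 𝕜 (c i) U') ∧ ∀ z ∈ U' ∩ U, f z = ∑ i, c i z • w i) :
    WeaklyAnalyticOn 𝕜 K f U := by
  intro ℓ z₀ hz₀
  obtain ⟨U', hU', hz₀', r, w, c, hc, hfc⟩ := hf z₀ hz₀
  refine (Finset.analyticOnNhd_fun_sum Finset.univ
    (fun i _ => (hc i).mul (analyticOnNhd_const (v := ℓ (w i)))) z₀ hz₀').congr ?_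
  filter_upwards [(hU'.inter hU).mem_nhds ⟨hz₀', hz₀⟩] with z hz
  simp [hfc z hz, smul_eq_mul]

theorem WeaklyAnalyticOn.map {f : E → V} (hf : WeaklyAnalyticOn 𝕜 K f U) (φ : V →ₗ[K] W) :
    WeaklyAnalyticOn 𝕜 K (fun z => φ (f z)) U :=
  fun ℓ => hf (ℓ ∘ₗ φ)

theorem WeaklyAnalyticOn.add {f g : E → V} (hf : WeaklyAnalyticOn 𝕜 K f U)
    (hg : WeaklyAnalyticOn 𝕜 K g U) : WeaklyAnalyticOn 𝕜 K (fun z => f z + g z) U := by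
  intro ℓ
  simp only [map_add]
  exact (hf ℓ).add (hg ℓ)

theorem WeaklyAnalyticOn.smul {c : E → K} {f : E → V} (hc : AnalyticOnNhd 𝕜 c U)
    (hf : WeaklyAnalyticOn 𝕜 K f U) : WeaklyAnalyticOn 𝕜 K (fun z => c z • f z) U := by
  intro ℓ
  simp only [map_smul, smul_eq_mul]
  exact hc.mul (hf ℓ)

theorem WeaklyAnalyticOn.sum {ι : Type*} (s : Finset ι) {f : ι → E → V}
    (hf : ∀ i ∈ s, WeaklyAnalyticOn 𝕜 K (f i) U) :
    WeaklyAnalyticOn 𝕜 K (fun z => ∑ i ∈ s, f i z) U := by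
  intro ℓ
  simp only [map_sum]
  exact Finset.analyticOnNhd_fun_sum s fun i hi => hf i hi ℓ

end WeaklyAnalytic

section Continuation

variable {𝕜 K E W : Type*} [NontriviallyNormedField 𝕜] [NormedField K] [NormedAlgebra 𝕜 K]
  [NormedAddCommGroup E] [NormedSpace 𝕜 E] [AddCommGroup W] [Module K W] [FiniteDimensional K W]
  {U : Set E}

theorem eqOn_zero_of_apply_spanning_family_eq_zero {ι : Type*} (hUo : IsOpen U)
    (hU : IsPreconnected U) {z₀ : E} (hz₀ : z₀ ∈ U) {D : E → Module.End K W}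
    (hD : ∀ w, WeaklyAnalyticOn 𝕜 K (fun z => D z w) U) {g : ι → E → W}
    (hg : ∀ k, WeaklyAnalyticOn 𝕜 K (g k) U)
    (hspan : Submodule.span K (Set.range fun k => g k z₀) = ⊤)
    (hDg : ∀ z ∈ U, ∀ k, D z (g k z) = 0) :
    ∀ z ∈ U, D z = 0 := by
  classical
  obtain ⟨κ, a, -, hspan', hli⟩ := exists_linearIndependent' K fun k => g k z₀
  let b : Basis κ K W := Basis.mk hli (by rw [hspan', hspan])
  let _ : Fintype κ := FiniteDimensional.fintypeBasisIndex b
  have hδ : AnalyticOnNhd 𝕜 (fun z => b.det fun k => g (a k) z) U := by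
    simp_rw [Basis.det_apply]
    exact AnalyticOnNhd.matrix_det fun i j => by
      simpa [Basis.toMatrix_apply] using hg (a j) (b.coord i)
  have hδ₀ : (b.det fun k => g (a k) z₀) = 1 := by
    rw [← b.det_self]
    exact congrArg b.det (Basis.coe_mk hli _).symm
  have hnear : ∀ᶠ z in 𝓝 z₀, D z = 0 := by
    filter_upwards [(hδ z₀ hz₀).continuousAt.eventually_ne (by rw [hδ₀]; exact one_ne_zero),
      hUo.mem_nhds hz₀] with z hδz hz
    exact LinearMap.ext_on_range ((b.is_basis_iff_det).mpr (isUnit_iff_ne_zero.mpr hδz)).2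
      fun k => by simpa using hDg z hz (a k)
  intro z hz
  ext w
  rw [LinearMap.zero_apply, ← b.forall_coord_eq_zero_iff]
  intro i
  refine (hD w (b.coord i)).eqOn_zero_of_preconnected_of_eventuallyEq_zero hU hz₀ ?_ hz
  filter_upwards [hnear] with z hz
  simp [hz]

end Continuation

section CayleyHamilton

variable {𝕜 K E V : Type*} [NontriviallyNormedField 𝕜] [NormedField K] [NormedAlgebra 𝕜 K]
  [NormedAddCommGroup E] [NormedSpace 𝕜 E] [AddCommGroup V] [Module K V] {U : Set E}

theorem exists_analyticOnNhd_annihilating_on_invariant_submodule (L : Submodule K V)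
    [FiniteDimensional K L] {g : E → Module.End K V} (hgL : ∀ z ∈ U, ∀ v ∈ L, g z v ∈ L)
    (hg : ∀ v, WeaklyAnalyticOn 𝕜 K (fun z => g z v) U) :
    ∃ (n : ℕ) (a : Fin n → E → K), (∀ j, AnalyticOnNhd 𝕜 (a j) U) ∧
      ∀ z ∈ U, ∀ v ∈ L, (g z ^ n + ∑ j, a j z • g z ^ (j : ℕ)) v = 0 := by
  obtain ⟨L', hL'⟩ := L.exists_isCompl
  -- The compression is defined for every `z`, unlike the restriction, which it equals on `U`.
  let c : E → Module.End K L := fun z => L.projectionOnto L' hL' ∘ₗ g z ∘ₗ L.subtype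
  have hc : ∀ z (hz : z ∈ U), c z = (g z).restrict (hgL z hz) := fun z hz => by
    ext v
    simp [c, Submodule.projectionOnto_apply_of_mem_left hL' (hgL z hz v v.2)]
  refine ⟨finrank K L, fun j z => (c z).charpoly.coeff j, fun j => ?_, fun z hz v hv => ?_⟩
  · let b := Module.finBasis K L
    simp_rw [← LinearMap.charpoly_toMatrix (c _) b]
    refine AnalyticOnNhd.matrix_charpoly_coeff (fun i j => ?_) j
    simpa [LinearMap.toMatrix_apply, c] using hg (b j) (b.coord i ∘ₗ L.projectionOnto L' hL')
  · rw [← (c z).charpoly_monic.aeval_eq_pow_add_sum (c z).charpoly_natDegree,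
      ← LinearMap.coe_aeval_restrict_apply (hgL z hz) _ ⟨v, hv⟩, ← hc z hz,
      LinearMap.aeval_self_charpoly]
    rfl

end CayleyHamilton

section Isotypic

variable {𝕜 K E V A Γ : Type*} [NontriviallyNormedField 𝕜] [NormedField K] [NormedAlgebra 𝕜 K]
  [NormedAddCommGroup E] [NormedSpace 𝕜 E] [AddCommGroup V] [Module K V] [Ring A] [Algebra K A]
  {U : Set E} {Viso : Γ → Submodule K V} {μ : E → A →ₐ[K] Module.End K V}

theorem eqOn_zero_of_central_annihilates_generating_submodule (hUo : IsOpen U)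
    (hU : IsPreconnected U) (hfin : ∀ γ, FiniteDimensional K (Viso γ)) (hindep : iSupIndep Viso)
    (hspan : ⨆ γ, Viso γ = ⊤) (hμ : ∀ y v, WeaklyAnalyticOn 𝕜 K (fun z => μ z y v) U)
    (hcentral : ∀ z ∈ U, ∀ y ∈ Set.center A, ∀ γ, ∀ v ∈ Viso γ, μ z y v ∈ Viso γ)
    {z₀ : E} (hz₀ : z₀ ∈ U) {L : Submodule K V}
    (hL : Submodule.span K {x : V | ∃ y : A, ∃ v ∈ L, x = μ z₀ y v} = ⊤)
    {S : E → A} (hS : ∀ z, S z ∈ Set.center A)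
    (hSan : ∀ v, WeaklyAnalyticOn 𝕜 K (fun z => μ z (S z) v) U)
    (hSL : ∀ z ∈ U, ∀ v ∈ L, μ z (S z) v = 0) :
    ∀ z ∈ U, μ z (S z) = 0 := by
  suffices h : ∀ γ, ∀ z ∈ U, ∀ v ∈ Viso γ, μ z (S z) v = 0 by
    intro z hz
    rw [← LinearMap.ker_eq_top, eq_top_iff, ← hspan]
    exact iSup_le fun γ v hv => h γ z hz v hv
  intro γ
  have hcompl := hindep.isCompl_iSup_ne hspan γ
  set q := (Viso γ).projectionOnto _ hcompl
  have hSμ : ∀ z y w, μ z (S z) (μ z y w) = μ z y (μ z (S z) w) := fun z y w => by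
    rw [← Module.End.mul_apply, ← map_mul, (hS z).comm y, map_mul, Module.End.mul_apply]
  have hD : ∀ z ∈ U, q ∘ₗ μ z (S z) ∘ₗ (Viso γ).subtype = 0 := by
    have := hfin γ
    refine eqOn_zero_of_apply_spanning_family_eq_zero (g := fun (k : A × L) z => q (μ z k.1 k.2))
      hUo hU hz₀ (fun w => (hSan w).map q) (fun k => (hμ k.1 k.2).map q) ?_ ?_
    · have hrange : {x : V | ∃ y : A, ∃ v ∈ L, x = μ z₀ y v} =
          Set.range fun k : A × L => μ z₀ k.1 k.2 := by
        ext x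
        simp [eq_comm]
      rw [Set.range_comp' q, Submodule.span_image, ← hrange, hL, Submodule.map_top,
        Submodule.range_projectionOnto]
    · intro z hz k
      have hC := Submodule.biSup_le_comap_biSup (hcentral z hz _ (hS z)) fun γ' => γ' ≠ γ
      calc q (μ z (S z) ((Viso γ).projection _ hcompl (μ z k.1 k.2)))
          = q (μ z (S z) (μ z k.1 k.2)) := Submodule.projectionOnto_apply_projection hcompl hC _
        _ = 0 := by rw [hSμ, hSL z hz _ k.2.2, map_zero, map_zero]
  intro z hz v hv
  have hmem := hcentral z hz _ (hS z) γ v hv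
  have := LinearMap.congr_fun (hD z hz) ⟨v, hv⟩
  rwa [LinearMap.comp_apply, LinearMap.comp_apply, Submodule.subtype_apply,
    Submodule.projectionOnto_apply_of_mem_left hcompl hmem, LinearMap.zero_apply,
    Submodule.mk_eq_zero] at this

end Isotypic

/-- van der Noort: Let `(μ, V)` be an analytic family of admissible
`(𝔤,K)`-modules over a connected analytic manifold (here: a connected open set `U` of a
real normed space `E`).  Admissibility is encoded by the decomposition of `V` into
finite dimensional isotypic components `Viso γ`, each stable under the action of the
center of the algebra `A` (standing for `U(𝔤)`).  Analyticity of `z ↦ μ z y v` is in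
the sense of the paper: locally, values lie in a fixed finite dimensional subspace and
the coordinates are analytic.  If `(μ_{z₀}, V)` is finitely generated for some
`z₀ ∈ U`, then for every central `T ∈ A` there exist `n` and analytic functions
`a₀, …, a_{n-1}` on `U` with `μ_z(T)ⁿ + Σ_{j<n} a_j(z)·μ_z(T)ʲ = 0` for all `z ∈ U`. -/
theorem stmt16
    {E : Type*} [NormedAddCommGroup E] [NormedSpace ℝ E]
    {V : Type*} [AddCommGroup V] [Module ℂ V]
    {A : Type*} [Ring A] [Algebra ℂ A]
    (U : Set E) (hUo : IsOpen U) (hUconn : IsPreconnected U)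
    (Γ : Type*) (Viso : Γ → Submodule ℂ V)
    (hfin : ∀ γ, FiniteDimensional ℂ (Viso γ))
    (hindep : iSupIndep Viso)
    (hspan : ⨆ γ, Viso γ = ⊤)
    (μ : E → A →ₐ[ℂ] Module.End ℂ V)
    (hanal : ∀ (y : A) (v : V), ∀ z₀ ∈ U, ∃ U' : Set E, IsOpen U' ∧ z₀ ∈ U' ∧
      ∃ (r : ℕ) (w : Fin r → V) (c : Fin r → E → ℂ),
        (∀ i, AnalyticOnNhd ℝ (c i) U') ∧ ∀ z ∈ U' ∩ U, μ z y v = ∑ i, c i z • w i)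
    (hcentral : ∀ z ∈ U, ∀ y ∈ Set.center A, ∀ γ, ∀ v ∈ Viso γ, μ z y v ∈ Viso γ)
    (z₀ : E) (hz₀ : z₀ ∈ U)
    (hfg : ∃ F : Finset Γ,
      Submodule.span ℂ {x : V | ∃ y : A, ∃ v ∈ ⨆ γ ∈ F, Viso γ, x = μ z₀ y v} = ⊤)
    (T : A) (hT : T ∈ Set.center A) :
    ∃ (nn : ℕ) (aco : Fin nn → E → ℂ),
      (∀ j, AnalyticOnNhd ℝ (aco j) U) ∧
      ∀ z ∈ U, (μ z T) ^ nn + ∑ j : Fin nn, aco j z • (μ z T) ^ (j : ℕ) = 0 := by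
  obtain ⟨F, hF⟩ := hfg
  have hμ : ∀ y v, WeaklyAnalyticOn ℝ ℂ (fun z => μ z y v) U := fun y v =>
    WeaklyAnalyticOn.of_locally_finite_sum hUo (hanal y v)
  set L := ⨆ (γ) (_ : γ ∈ F), Viso γ
  have hLfin := Submodule.finiteDimensional_finset_sup F Viso
  rw [Finset.sup_eq_iSup] at hLfin
  obtain ⟨n, a, ha, hannih⟩ := exists_analyticOnNhd_annihilating_on_invariant_submodule L
    (fun z hz => Submodule.biSup_le_comap_biSup (hcentral z hz T hT) _) (hμ T)
  let S : E → A := fun z => T ^ n + ∑ j, a j z • T ^ (j : ℕ)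
  have hμS : ∀ z, μ z (S z) = μ z T ^ n + ∑ j, a j z • μ z T ^ (j : ℕ) := fun z => by
    simp only [S, map_add, map_sum, map_smul, map_pow]
  have hS : ∀ z, S z ∈ Set.center A := fun z => by
    have hT' : T ∈ Subalgebra.center ℂ A := hT
    exact add_mem (pow_mem hT' n) (sum_mem fun j _ => Subalgebra.smul_mem _ (pow_mem hT' _) _)
  have hSan : ∀ v, WeaklyAnalyticOn ℝ ℂ (fun z => μ z (S z) v) U := fun v => by
    simp only [S, map_add, map_sum, map_smul, LinearMap.add_apply, LinearMap.sum_apply,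
      LinearMap.smul_apply]
    exact (hμ _ v).add (WeaklyAnalyticOn.sum _ fun j _ => WeaklyAnalyticOn.smul (ha j) (hμ _ v))
  refine ⟨n, a, ha, fun z hz => ?_⟩
  rw [← hμS]
  exact eqOn_zero_of_central_annihilates_generating_submodule hUo hUconn hfin hindep hspan hμ
    hcentral hz₀ hF hS hSan (fun z hz v hv => (hμS z).symm ▸ hannih z hz v hv) z hz
end
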